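/- arXiv:math/9904120 — 2 statements merged into one kernel-verified Lean document; each statement's English description precedes it below -/
import Mathlib

section
/- Let λ_1,…,λ_n > 0 and for each i let Q_i := ∏_{j : n_j > 0} δ_{ij}·Δ(n_j) ⊂ ℝ^n be the cartesian product over the blocks of the scaled standard simplices. Then the Lebesgue volume of the Minkowski sum λ_1 Q_1 + ⋯ + λ_n Q_n equals (∏_{j : n_j > 0} (Σ_{i=1}^n λ_i δ_{ij})^{n_j}) / (n_1!⋯n_k!). (The computation underlying Proposition 6.1, identifying the BKK bound of a multihomogeneous system with a permanent.) -/
/-!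
Each `Q_i` is the product over the blocks `j` of the simplices `δ_{ij} Δ(n_j)`, and dilations and
Minkowski sums of products are computed blockwise. Since `Δ(m)` is convex, `a Δ(m) + b Δ(m) =
(a + b) Δ(m)` for `a, b ≥ 0`, so `∑_i λ_i Q_i` is the product of the simplices
`(∑_i λ_i δ_{ij}) Δ(n_j)`. Its volume is the product of their volumes, and `c Δ(m)` has volume
`c^m / m!` by slicing along the first coordinate: the slice at height `t ∈ [0, c]` is
`(c - t) Δ(m - 1)`.
-/

open MeasureTheory Pointwise

def scaledSimplex (ι : Type*) [Fintype ι] (c : ℝ) : Set (ι → ℝ) :=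
  {x | (∀ h, 0 ≤ x h) ∧ ∑ h, x h ≤ c}

section

variable {ι : Type*} [Fintype ι]

theorem zero_mem_scaledSimplex {c : ℝ} (hc : 0 ≤ c) : (0 : ι → ℝ) ∈ scaledSimplex ι c := by
  simp [scaledSimplex, hc]

theorem scaledSimplex_zero : scaledSimplex ι 0 = 0 := by
  ext x
  simp only [scaledSimplex, Set.mem_ofPred_eq, Set.mem_zero]
  constructor
  · rintro ⟨hx, hsum⟩
    have hsum' : ∑ h, x h = 0 := le_antisymm hsum (Finset.sum_nonneg fun h _ => hx h)
    funext h
    exact (Finset.sum_eq_zero_iff_of_nonneg fun h _ => hx h).1 hsum' h (Finset.mem_univ h)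
  · rintro rfl
    simp

theorem scaledSimplex_eq_empty {c : ℝ} (hc : c < 0) : scaledSimplex ι c = ∅ :=
  Set.eq_empty_of_forall_notMem fun _ ⟨hx, hsum⟩ =>
    (Finset.sum_nonneg fun h _ => hx h).not_gt (hsum.trans_lt hc)

theorem convex_scaledSimplex (c : ℝ) : Convex ℝ (scaledSimplex ι c) := by
  rintro x ⟨hx, hxs⟩ y ⟨hy, hys⟩ a b ha hb hab
  simp only [scaledSimplex, Set.mem_ofPred_eq, Pi.add_apply, Pi.smul_apply, smul_eq_mul,
    Finset.sum_add_distrib, ← Finset.mul_sum]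
  refine ⟨fun h => add_nonneg (mul_nonneg ha (hx h)) (mul_nonneg hb (hy h)), ?_⟩
  calc a * ∑ h, x h + b * ∑ h, y h ≤ a * c + b * c := by gcongr
    _ = c := by rw [← add_mul, hab, one_mul]

theorem measurableSet_scaledSimplex (c : ℝ) : MeasurableSet (scaledSimplex ι c) := by
  unfold scaledSimplex
  measurability

theorem scaledSimplex_eq_smul_one {c : ℝ} (hc : 0 ≤ c) :
    scaledSimplex ι c = c • scaledSimplex ι 1 := by
  rcases hc.eq_or_lt with rfl | hc
  · rw [scaledSimplex_zero, Set.zero_smul_set ⟨0, zero_mem_scaledSimplex zero_le_one⟩]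
  ext x
  rw [Set.mem_smul_set_iff_inv_smul_mem₀ hc.ne']
  simp only [scaledSimplex, Set.mem_ofPred_eq, Pi.smul_apply, smul_eq_mul, ← Finset.mul_sum]
  rw [inv_mul_le_iff₀ hc, mul_one]
  simp only [inv_pos.2 hc, mul_nonneg_iff_of_pos_left]

theorem smul_scaledSimplex {a c : ℝ} (ha : 0 ≤ a) (hc : 0 ≤ c) :
    a • scaledSimplex ι c = scaledSimplex ι (a * c) := by
  rw [scaledSimplex_eq_smul_one hc, scaledSimplex_eq_smul_one (mul_nonneg ha hc), smul_smul]

theorem scaledSimplex_add_scaledSimplex {a b : ℝ} (ha : 0 ≤ a) (hb : 0 ≤ b) :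
    scaledSimplex ι a + scaledSimplex ι b = scaledSimplex ι (a + b) := by
  rw [scaledSimplex_eq_smul_one ha, scaledSimplex_eq_smul_one hb,
    scaledSimplex_eq_smul_one (add_nonneg ha hb), (convex_scaledSimplex 1).add_smul ha hb]

theorem sum_scaledSimplex {κ : Type*} (s : Finset κ) {c : κ → ℝ} (hc : ∀ i ∈ s, 0 ≤ c i) :
    ∑ i ∈ s, scaledSimplex ι (c i) = scaledSimplex ι (∑ i ∈ s, c i) := by
  classical
  induction s using Finset.induction_on with
  | empty => simp [scaledSimplex_zero]
  | insert i s hi ih =>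
    rw [Finset.forall_mem_insert] at hc
    rw [Finset.sum_insert hi, Finset.sum_insert hi, ih hc.2,
      scaledSimplex_add_scaledSimplex hc.1 (Finset.sum_nonneg hc.2)]

end

theorem Set.sum_univ_pi {κ ι : Type*} [Fintype κ] {R : ι → Type*} [∀ j, AddCommMonoid (R j)]
    (t : κ → (j : ι) → Set (R j)) :
    ∑ i, Set.univ.pi (t i) = Set.univ.pi fun j => ∑ i, t i j := by
  ext z
  simp only [Set.mem_fintype_sum, Set.mem_univ_pi]
  constructor
  · rintro ⟨g, hg, rfl⟩ j
    exact ⟨fun i => g i j, fun i => hg i j, by simp [Finset.sum_apply]⟩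
  · intro h
    choose g hg hsum using h
    exact ⟨fun i j => g j i, fun i j => hg j i, funext fun j => by simp [Finset.sum_apply, hsum]⟩

theorem cons_mem_scaledSimplex_iff {m : ℕ} {c t : ℝ} {y : Fin m → ℝ} :
    Fin.cons t y ∈ scaledSimplex (Fin (m + 1)) c ↔
      0 ≤ t ∧ y ∈ scaledSimplex (Fin m) (c - t) := by
  simp only [scaledSimplex, Set.mem_ofPred_eq, Fin.forall_fin_succ, Fin.sum_univ_succ,
    Fin.cons_zero, Fin.cons_succ, le_sub_iff_add_le']
  tauto

theorem lintegral_Icc_sub_pow_div_factorial (m : ℕ) {c : ℝ} (hc : 0 ≤ c) :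
    ∫⁻ t in Set.Icc 0 c, ENNReal.ofReal ((c - t) ^ m / m.factorial) =
      ENNReal.ofReal (c ^ (m + 1) / (m + 1).factorial) := by
  have hcont : Continuous fun t : ℝ => (c - t) ^ m / m.factorial := by fun_prop
  rw [← ofReal_integral_eq_lintegral_ofReal hcont.integrableOn_Icc
    ((ae_restrict_iff' measurableSet_Icc).2 (.of_forall fun t ht => by
      have := sub_nonneg.2 ht.2; positivity))]
  congr 1
  rw [integral_Icc_eq_integral_Ioc, ← intervalIntegral.integral_of_le hc,
    intervalIntegral.integral_div, intervalIntegral.integral_comp_sub_left (fun s => s ^ m) c,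
    sub_self, sub_zero, integral_pow, Nat.factorial_succ]
  push_cast
  field_simp
  ring

theorem volume_scaledSimplex {m : ℕ} {c : ℝ} (hc : 0 ≤ c) :
    volume (scaledSimplex (Fin m) c) = ENNReal.ofReal (c ^ m / m.factorial) := by
  induction m generalizing c with
  | zero =>
    have : scaledSimplex (Fin 0) c = Set.univ.pi fun _ => Set.univ := by
      ext x; simp [scaledSimplex, hc]
    rw [this, volume_pi_pi]
    simp
  | succ m ih =>
    set e := MeasurableEquiv.piFinSuccAbove (fun _ : Fin (m + 1) => ℝ) 0
    have hslice (t : ℝ) : volume (Prod.mk t ⁻¹' (e.symm ⁻¹' scaledSimplex (Fin (m + 1)) c)) =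
        (Set.Icc 0 c).indicator (fun t => ENNReal.ofReal ((c - t) ^ m / m.factorial)) t := by
      have hpre : Prod.mk t ⁻¹' (e.symm ⁻¹' scaledSimplex (Fin (m + 1)) c) =
          {_y | 0 ≤ t} ∩ scaledSimplex (Fin m) (c - t) := by
        ext y
        simp only [Set.mem_preimage, Set.mem_inter_iff, Set.mem_ofPred_eq, e,
          MeasurableEquiv.piFinSuccAbove_symm_apply, Fin.insertNthEquiv_zero]
        exact cons_mem_scaledSimplex_iff
      rw [hpre]
      by_cases ht : t ∈ Set.Icc 0 c
      · simp [Set.indicator_of_mem ht, ht.1, ih (sub_nonneg.2 ht.2)]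
      · rw [Set.indicator_of_notMem ht]
        rcases not_and_or.1 ht with ht | ht
        · simp [ht]
        · simp [scaledSimplex_eq_empty (sub_neg.2 (not_le.1 ht))]
    rw [← (volume_preserving_piFinSuccAbove _ 0).symm.measure_preimage_equiv,
      Measure.volume_eq_prod,
      Measure.prod_apply ((measurableSet_scaledSimplex _).preimage e.symm.measurable)]
    simp_rw [hslice]
    rw [lintegral_indicator measurableSet_Icc, lintegral_Icc_sub_pow_div_factorial m hc]

theorem volume_minkowski_sum_scaled_simplex_products_general
    (k : ℕ) (n : Fin k → ℕ)
    (δ : Fin (∑ j, n j) → Fin k → ℕ)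
    (lam : Fin (∑ j, n j) → ℝ) (hlam : ∀ i, 0 < lam i) :
    volume (∑ i, lam i •
        {z : (j : Fin k) → Fin (n j) → ℝ |
          ∀ j, (∀ h, 0 ≤ z j h) ∧ (∑ h, z j h) ≤ (δ i j : ℝ)}) =
      ENNReal.ofReal
        ((∏ j, (∑ i, lam i * (δ i j : ℝ)) ^ (n j)) / ∏ j, (Nat.factorial (n j) : ℝ)) := by
  have hblock (i) : {z : (j : Fin k) → Fin (n j) → ℝ |
      ∀ j, (∀ h, 0 ≤ z j h) ∧ (∑ h, z j h) ≤ (δ i j : ℝ)} =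
      Set.univ.pi fun j => scaledSimplex (Fin (n j)) (δ i j) := by
    ext z
    simp [scaledSimplex]
  have hweight (i j) : 0 ≤ lam i * (δ i j : ℝ) := mul_nonneg (hlam i).le (Nat.cast_nonneg _)
  have htotal (j) : 0 ≤ ∑ i, lam i * (δ i j : ℝ) := Finset.sum_nonneg fun i _ => hweight i j
  simp_rw [hblock, smul_univ_pi, Pi.smul_def,
    smul_scaledSimplex (hlam _).le (Nat.cast_nonneg _), Set.sum_univ_pi,
    sum_scaledSimplex _ fun i _ => hweight i _, volume_pi_pi,
    volume_scaledSimplex (htotal _)]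
  rw [← ENNReal.ofReal_prod_of_nonneg fun j _ =>
      div_nonneg (pow_nonneg (htotal j) _) (Nat.cast_nonneg _),
    Finset.prod_div_distrib]

/-- **The computation underlying Proposition 6.1**: for `λ_1, …, λ_n > 0` and
`Q_i = ∏_{j : n_j > 0} δ_{ij} Δ(n_j)` (the product over the blocks of the scaled standard
simplices), the Lebesgue volume of the Minkowski sum `λ_1 Q_1 + ⋯ + λ_n Q_n` is
`(∏_j (∑_i λ_i δ_{ij})^{n_j}) / (n_1! ⋯ n_k!)`. -/
theorem volume_minkowski_sum_scaled_simplex_products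
    (k : ℕ) (hk : 0 < k) (n : Fin k → ℕ) (hn : 1 ≤ ∑ j, n j)
    (δ : Fin (∑ j, n j) → Fin k → ℕ)
    (lam : Fin (∑ j, n j) → ℝ) (hlam : ∀ i, 0 < lam i) :
    volume (∑ i, lam i •
        {z : (j : Fin k) → Fin (n j) → ℝ |
          ∀ j, (∀ h, 0 ≤ z j h) ∧ (∑ h, z j h) ≤ (δ i j : ℝ)}) =
      ENNReal.ofReal
        ((∏ j, (∑ i, lam i * (δ i j : ℝ)) ^ (n j)) / ∏ j, (Nat.factorial (n j) : ℝ)) :=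
  volume_minkowski_sum_scaled_simplex_products_general k n δ lam hlam
end

section
/- The inner product ⟨f, f'⟩_i := Σ_{a∈A_i} η(a) f_a f'_a on ℋ_i is invariant under the action of G = O(n_1+1)×⋯×O(n_k+1) and makes the monomials pairwise orthogonal; moreover it is the unique such inner product up to multiplication by a positive scalar: any inner product on ℋ_i that is G-invariant and with respect to which the monomials x^a (a ∈ A_i) are pairwise orthogonal is a positive scalar multiple of ⟨·,·⟩_i. (Lemma 3.1.) -/
/-!
The polynomial `K_v(x) = ∏_j ⟨v_j, x_j⟩^{δ_j}` has coefficients `multinomial(a) · v^a`, and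
`η(a) · multinomial(a) = 1`, so `⟨f, K_v⟩ = f(v)`: the `K_v` are reproducing kernels. Since
`O·K_v = K_{Ov}` and the `K_v` span `ℋ_i`, invariance follows from
`⟨O·f, K_{Ov}⟩ = f(v) = ⟨f, K_v⟩`.

For uniqueness, let `B` be invariant with the monomials orthogonal, so `B` is diagonal with
weights `b_a`. Rotating each block `v_j` onto `|v_j| e_0` turns `K_v` into `∏_j |v_j|^{δ_j}`
times the fixed kernel `K_{e_0}`, so `B(K_v, K_v) = t · ∏_j |v_j|^{2δ_j} = t · ⟨K_v, K_v⟩`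
with `t = B(K_{e_0}, K_{e_0})`. Both sides are polynomials in `v` with coefficients
`b_a multinomial(a)²` and `t η(a) multinomial(a)²` on the distinct monomials `v^{2a}`, hence
`b_a = t η(a)`.
-/

namespace MH

variable {k : ℕ}

/-- The set of exponent vectors `A_i`: for each block `j` a tuple of exponents on the
variables `y_{j0}, …, y_{j n_j}` summing to the degree `d j`. -/
def ExpVec (n d : Fin k → ℕ) : Type _ :=
  { a : (j : Fin k) → Fin (n j + 1) → Fin (d j + 1) // ∀ j, ∑ h, ((a j h : ℕ)) = d j }

noncomputable instance (n d : Fin k → ℕ) : Fintype (ExpVec n d) := by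
  unfold ExpVec; infer_instance

instance (n d : Fin k → ℕ) : DecidableEq (ExpVec n d) := by
  unfold ExpVec; infer_instance

/-- `η(a) = ∏_j (a_{j0}! ⋯ a_{j n_j}!) / (a_{j0} + ⋯ + a_{j n_j})!`. -/
noncomputable def etaR (n d : Fin k → ℕ) (a : ExpVec n d) : ℝ :=
  ∏ j, (∏ h, (Nat.factorial (a.1 j h) : ℝ)) / (Nat.factorial (d j) : ℝ)

/-- Evaluation of the polynomial with coefficient vector `c` at `x = (y_1, …, y_k)`. -/
noncomputable def evalPoly (n d : Fin k → ℕ) (c : ExpVec n d → ℝ)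
    (x : (j : Fin k) → Fin (n j + 1) → ℝ) : ℝ :=
  ∑ a : ExpVec n d, c a * ∏ j, ∏ h, (x j h) ^ ((a.1 j h : ℕ))

/-- The inner product `⟨f, f'⟩_i = ∑_{a ∈ A_i} η(a) f_a f'_a` on the coefficient space. -/
noncomputable def innerH (n d : Fin k → ℕ) (c c' : ExpVec n d → ℝ) : ℝ :=
  ∑ a : ExpVec n d, etaR n d a * c a * c' a

/-- The blockwise action of `O ∈ G = O(n_1+1) × ⋯ × O(n_k+1)` on the point
`x = (y_1, …, y_k)`, i.e. `x ↦ Ox`. -/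
noncomputable def actPt (n : Fin k → ℕ)
    (O : (j : Fin k) → Matrix.orthogonalGroup (Fin (n j + 1)) ℝ)
    (x : (j : Fin k) → Fin (n j + 1) → ℝ) : (j : Fin k) → Fin (n j + 1) → ℝ :=
  fun j => ((O j : Matrix (Fin (n j + 1)) (Fin (n j + 1)) ℝ)).mulVec (x j)

/-- `cO` is the coefficient vector of the polynomial `O·f = f ∘ O⁻¹`, where `c` is the
coefficient vector of `f`; this characterizes the action of `G` on `ℋ_i`. -/
def IsActed (n d : Fin k → ℕ)
    (O : (j : Fin k) → Matrix.orthogonalGroup (Fin (n j + 1)) ℝ)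
    (c cO : ExpVec n d → ℝ) : Prop :=
  ∀ x : (j : Fin k) → Fin (n j + 1) → ℝ,
    evalPoly n d cO x = evalPoly n d c (actPt n (fun j => (O j)⁻¹) x)

end MH

open Finset Matrix

theorem eq_of_forall_sum_mul_prod_pow_eq {R σ ι : Type*} [CommRing R] [IsDomain R] [Infinite R]
    [Fintype σ] [Fintype ι] {e : ι → σ → ℕ} (he : Function.Injective e) {C C' : ι → R}
    (h : ∀ y : σ → R, ∑ i, C i * ∏ s, y s ^ e i s = ∑ i, C' i * ∏ s, y s ^ e i s) :
    C = C' := by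
  let p : ι → MvPolynomial σ R := fun i =>
    MvPolynomial.monomial (Finsupp.equivFunOnFinite.symm (e i)) 1
  have hp : LinearIndependent R p :=
    (MvPolynomial.basisMonomials σ R).linearIndependent.comp _
      (Finsupp.equivFunOnFinite.symm.injective.comp he)
  have heval (D : ι → R) (y : σ → R) :
      MvPolynomial.eval y (∑ i, D i • p i) = ∑ i, D i * ∏ s, y s ^ e i s := by
    simp [p, MvPolynomial.eval_monomial, Finsupp.prod_fintype]
  funext i
  exact Fintype.linearIndependent_iffₛ.1 hp C C'
    (MvPolynomial.funext fun y => by rw [heval, heval, h]) i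

theorem Matrix.exists_mem_orthogonalGroup_mulVec_eq {m : Type*} [Fintype m] [DecidableEq m]
    {v w : m → ℝ} (h : v ⬝ᵥ v = w ⬝ᵥ w) :
    ∃ O ∈ orthogonalGroup m ℝ, O *ᵥ v = w := by
  let v' : EuclideanSpace ℝ m := WithLp.toLp 2 v
  let w' : EuclideanSpace ℝ m := WithLp.toLp 2 w
  have hnorm : ‖v'‖ = ‖w'‖ := by
    simp only [EuclideanSpace.norm_eq, v', w']
    congr 1
    simpa [dotProduct, sq] using h
  let f := Submodule.reflection (ℝ ∙ (v' - w'))ᗮ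
  let b := (EuclideanSpace.basisFun m ℝ).toBasis
  refine ⟨LinearMap.toMatrix b b f, f.toMatrix_mem_unitaryGroup _ _, ?_⟩
  have := LinearMap.toMatrix_mulVec_repr b b f.toLinearEquiv.toLinearMap v'
  rwa [LinearEquiv.coe_coe, LinearIsometryEquiv.coe_toLinearEquiv,
    Submodule.reflection_sub hnorm] at this

theorem Matrix.dotProduct_inv_mulVec {m : Type*} [Fintype m] [DecidableEq m]
    (O : orthogonalGroup m ℝ) (v x : m → ℝ) :
    v ⬝ᵥ ((O⁻¹ : orthogonalGroup m ℝ) : Matrix m m ℝ) *ᵥ x =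
      (O : Matrix m m ℝ) *ᵥ v ⬝ᵥ x := by
  rw [UnitaryGroup.inv_val, star_eq_conjTranspose, conjTranspose_eq_transpose_of_trivial,
    dotProduct_mulVec, vecMul_transpose]

theorem LinearMap.apply_eq_sum_of_apply_single_eq_zero {ι R : Type*} [Fintype ι]
    [DecidableEq ι] [CommSemiring R] (B : (ι → R) →ₗ[R] (ι → R) →ₗ[R] R)
    (h : ∀ i j, i ≠ j → B (Pi.single i 1) (Pi.single j 1) = 0) (c c' : ι → R) :
    B c c' = ∑ i, c i * c' i * B (Pi.single i 1) (Pi.single i 1) := by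
  conv_lhs => rw [pi_eq_sum_univ' c, pi_eq_sum_univ' c']
  simp only [map_sum, LinearMap.sum_apply, map_smul, LinearMap.smul_apply, smul_eq_mul]
  refine sum_congr rfl fun i _ => ?_
  rw [sum_eq_single i (fun j _ hji => by rw [h j i hji, mul_zero]) (by simp)]
  ring

namespace MH

variable {k : ℕ} {n d : Fin k → ℕ}

def monomialEval (a : ExpVec n d) (x : (j : Fin k) → Fin (n j + 1) → ℝ) : ℝ :=
  ∏ j, ∏ h, x j h ^ (a.1 j h : ℕ)

theorem evalPoly_eq_sum (c : ExpVec n d → ℝ) (x : (j : Fin k) → Fin (n j + 1) → ℝ) :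
    evalPoly n d c x = ∑ a, c a * monomialEval a x := rfl

theorem eq_of_forall_sum_mul_monomialEval_pow_eq {m : ℕ} (hm : m ≠ 0)
    {C C' : ExpVec n d → ℝ}
    (h : ∀ x, ∑ a, C a * monomialEval a x ^ m = ∑ a, C' a * monomialEval a x ^ m) :
    C = C' := by
  let e (a : ExpVec n d) (s : Σ j, Fin (n j + 1)) : ℕ := (a.1 s.1 s.2 : ℕ) * m
  have he : Function.Injective e := fun a a' haa' =>
    Subtype.ext <| funext fun j => funext fun h => Fin.ext <|
      Nat.eq_of_mul_eq_mul_right (Nat.pos_of_ne_zero hm) (congrFun haa' ⟨j, h⟩)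
  refine eq_of_forall_sum_mul_prod_pow_eq he fun y => ?_
  have hmono (a : ExpVec n d) :
      monomialEval a (fun j h => y ⟨j, h⟩) ^ m = ∏ s, y s ^ ((a.1 s.1 s.2 : ℕ) * m) := by
    rw [Fintype.prod_sigma]
    simp only [monomialEval, pow_mul, prod_pow]
  simpa only [hmono] using h fun j h => y ⟨j, h⟩

theorem eq_of_forall_evalPoly_eq {c c' : ExpVec n d → ℝ}
    (h : ∀ x, evalPoly n d c x = evalPoly n d c' x) : c = c' :=
  eq_of_forall_sum_mul_monomialEval_pow_eq one_ne_zero (by simpa [evalPoly_eq_sum] using h)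

def multinomial (a : ExpVec n d) : ℕ :=
  ∏ j, Nat.multinomial univ fun h => (a.1 j h : ℕ)

theorem multinomial_pos (a : ExpVec n d) : 0 < multinomial a :=
  prod_pos fun _ _ => Nat.multinomial_pos _ _

theorem etaR_mul_multinomial (a : ExpVec n d) : etaR n d a * multinomial a = 1 := by
  rw [etaR, multinomial, Nat.cast_prod, ← prod_mul_distrib]
  refine prod_eq_one fun j _ => ?_
  have hspec := Nat.multinomial_spec univ fun h => (a.1 j h : ℕ)
  rw [a.2 j] at hspec
  rw [div_mul_eq_mul_div, div_eq_one_iff_eq (by positivity), ← hspec]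
  push_cast
  rfl

variable (d) in
def kernel (v : (j : Fin k) → Fin (n j + 1) → ℝ) (a : ExpVec n d) : ℝ :=
  multinomial a * monomialEval a v

theorem sum_expVec_eq_sum_piFinset {M : Type*} [AddCommMonoid M]
    (F : ((j : Fin k) → Fin (n j + 1) → ℕ) → M) :
    ∑ a : ExpVec n d, F (fun j h => a.1 j h) =
      ∑ κ ∈ Fintype.piFinset fun j => piAntidiag univ (d j), F κ := by
  refine sum_bij (fun a _ j h => a.1 j h) (fun a _ => ?_) (fun a _ a' _ haa' => ?_)
    (fun κ hκ => ?_) fun _ _ => rfl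
  · simpa [mem_piAntidiag] using a.2
  · exact Subtype.ext <| funext fun j => funext fun h => Fin.ext (congrFun (congrFun haa' j) h)
  · have hκ' : ∀ j, ∑ h, κ j h = d j := by simpa [mem_piAntidiag] using hκ
    have hle (j : Fin k) (h : Fin (n j + 1)) : κ j h < d j + 1 :=
      Nat.lt_succ_of_le (hκ' j ▸ single_le_sum (fun _ _ => Nat.zero_le _) (mem_univ h))
    exact ⟨⟨fun j h => ⟨κ j h, hle j h⟩, hκ'⟩, mem_univ _, rfl⟩

theorem evalPoly_kernel (v x : (j : Fin k) → Fin (n j + 1) → ℝ) :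
    evalPoly n d (kernel d v) x = ∏ j, (v j ⬝ᵥ x j) ^ d j := by
  simp only [dotProduct, sum_pow_eq_sum_piAntidiag, prod_univ_sum]
  rw [evalPoly_eq_sum, ← sum_expVec_eq_sum_piFinset]
  refine sum_congr rfl fun a _ => ?_
  simp only [kernel, multinomial, monomialEval, mul_pow, prod_mul_distrib]
  push_cast
  ring

theorem kernel_smul (r : Fin k → ℝ) (v : (j : Fin k) → Fin (n j + 1) → ℝ) :
    kernel d (fun j => r j • v j) = (∏ j, r j ^ d j) • kernel d v := by
  funext a
  simp only [kernel, monomialEval, Pi.smul_apply, smul_eq_mul, mul_pow, prod_mul_distrib,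
    prod_pow_eq_pow_sum, a.2]
  ring

theorem innerH_kernel (c : ExpVec n d → ℝ) (v : (j : Fin k) → Fin (n j + 1) → ℝ) :
    innerH n d c (kernel d v) = evalPoly n d c v := by
  refine sum_congr rfl fun a _ => ?_
  calc etaR n d a * c a * kernel d v a
      = etaR n d a * multinomial a * (c a * monomialEval a v) := by rw [kernel]; ring
    _ = c a * monomialEval a v := by rw [etaR_mul_multinomial, one_mul]

theorem innerH_kernel_self (v : (j : Fin k) → Fin (n j + 1) → ℝ) :
    innerH n d (kernel d v) (kernel d v) = ∏ j, (v j ⬝ᵥ v j) ^ d j := by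
  rw [innerH_kernel, evalPoly_kernel]

theorem actPt_inv_actPt (O : (j : Fin k) → orthogonalGroup (Fin (n j + 1)) ℝ)
    (v : (j : Fin k) → Fin (n j + 1) → ℝ) :
    actPt n (fun j => (O j)⁻¹) (actPt n O v) = v := by
  funext j
  rw [actPt, actPt, mulVec_mulVec, ← UnitaryGroup.mul_val, inv_mul_cancel,
    UnitaryGroup.one_val, one_mulVec]

theorem isActed_kernel (O : (j : Fin k) → orthogonalGroup (Fin (n j + 1)) ℝ)
    (v : (j : Fin k) → Fin (n j + 1) → ℝ) :
    IsActed n d O (kernel d v) (kernel d (actPt n O v)) := by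
  intro x
  simp only [evalPoly_kernel, actPt, dotProduct_inv_mulVec]

theorem span_range_kernel : Submodule.span ℝ (Set.range (kernel (n := n) d)) = ⊤ := by
  by_contra hne
  obtain ⟨f, hf, hker⟩ := Submodule.exists_le_ker_of_lt_top _ (lt_top_iff_ne_top.2 hne)
  have hf_apply (c : ExpVec n d → ℝ) : f c = ∑ a, c a * f (Pi.single a 1) := by
    conv_lhs => rw [pi_eq_sum_univ' c]
    simp only [map_sum, map_smul, smul_eq_mul]
  have hμ : (fun a => multinomial a * f (Pi.single a 1)) = 0 :=
    eq_of_forall_evalPoly_eq fun v => by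
      rw [evalPoly_eq_sum, evalPoly_eq_sum]
      simp only [Pi.zero_apply, zero_mul, sum_const_zero]
      rw [← hker (Submodule.subset_span ⟨v, rfl⟩), hf_apply]
      exact sum_congr rfl fun a _ => by rw [kernel]; ring
  refine hf (LinearMap.ext fun c => ?_)
  have hμa (a : ExpVec n d) : f (Pi.single a 1) = 0 :=
    (mul_eq_zero.1 (congrFun hμ a)).resolve_left (Nat.cast_ne_zero.2 (multinomial_pos a).ne')
  rw [hf_apply, LinearMap.zero_apply]
  exact sum_eq_zero fun a _ => by rw [hμa, mul_zero]

theorem evalPoly_sum_smul {N : ℕ} (lam : Fin N → ℝ) (c : Fin N → ExpVec n d → ℝ)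
    (x : (j : Fin k) → Fin (n j + 1) → ℝ) :
    evalPoly n d (∑ i, lam i • c i) x = ∑ i, lam i * evalPoly n d (c i) x := by
  simp only [evalPoly, Finset.sum_apply, Pi.smul_apply, smul_eq_mul, sum_mul, mul_sum, mul_assoc]
  exact sum_comm

theorem innerH_sum_smul_right {N : ℕ} (c : ExpVec n d → ℝ) (lam : Fin N → ℝ)
    (c' : Fin N → ExpVec n d → ℝ) :
    innerH n d c (∑ i, lam i • c' i) = ∑ i, lam i * innerH n d c (c' i) := by
  simp only [innerH, Finset.sum_apply, Pi.smul_apply, smul_eq_mul, mul_sum, mul_left_comm]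
  exact sum_comm

def IsInvariant (β : (ExpVec n d → ℝ) → (ExpVec n d → ℝ) → ℝ) : Prop :=
  ∀ (O : (j : Fin k) → orthogonalGroup (Fin (n j + 1)) ℝ) (c c' cO cO' : ExpVec n d → ℝ),
    IsActed n d O c cO → IsActed n d O c' cO' → β cO cO' = β c c'

theorem innerH_invariant : IsInvariant (innerH n d) := by
  intro O c c' cO cO' hc hc'
  have hmem : c' ∈ Submodule.span ℝ (Set.range (kernel d)) := span_range_kernel ▸ trivial
  obtain ⟨N, lam, v, rfl⟩ := Submodule.mem_span_set'.1 hmem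
  choose w hw using fun i => (v i).2
  simp only [← hw] at hc' ⊢
  obtain rfl : cO' = ∑ i, lam i • kernel d (actPt n O (w i)) :=
    eq_of_forall_evalPoly_eq fun x => by
      simp only [hc' x, evalPoly_sum_smul, isActed_kernel O _ x]
  simp only [innerH_sum_smul_right, innerH_kernel, hc _, actPt_inv_actPt]

theorem innerH_single_single {a a' : ExpVec n d} (h : a ≠ a') :
    innerH n d (Pi.single a 1) (Pi.single a' 1) = 0 :=
  sum_eq_zero fun b _ => by
    rcases eq_or_ne b a with rfl | hb
    · rw [Pi.single_eq_of_ne h, mul_zero]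
    · rw [Pi.single_eq_of_ne hb, mul_zero, zero_mul]

variable (B : (ExpVec n d → ℝ) →ₗ[ℝ] (ExpVec n d → ℝ) →ₗ[ℝ] ℝ)

theorem IsInvariant.apply_kernel_self (hB : IsInvariant (B · ·))
    (v : (j : Fin k) → Fin (n j + 1) → ℝ) :
    B (kernel d v) (kernel d v) =
      (∏ j, (v j ⬝ᵥ v j) ^ d j) *
        B (kernel d fun _ => Pi.single 0 1) (kernel d fun _ => Pi.single 0 1) := by
  set r : Fin k → ℝ := fun j => √(v j ⬝ᵥ v j)
  have hr (j : Fin k) : r j * r j = v j ⬝ᵥ v j :=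
    Real.mul_self_sqrt (sum_nonneg fun _ _ => mul_self_nonneg _)
  have hsphere (j : Fin k) : v j ⬝ᵥ v j =
      (r j • Pi.single 0 1) ⬝ᵥ (r j • (Pi.single 0 1 : Fin (n j + 1) → ℝ)) := by
    simp [hr]
  choose O hO hOv using fun j => exists_mem_orthogonalGroup_mulVec_eq (hsphere j)
  set O' : (j : Fin k) → orthogonalGroup (Fin (n j + 1)) ℝ := fun j => ⟨O j, hO j⟩
  have hact : actPt n O' v = fun j => r j • Pi.single 0 1 := funext hOv
  calc B (kernel d v) (kernel d v)
      = B (kernel d (actPt n O' v)) (kernel d (actPt n O' v)) :=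
        (hB _ _ _ _ _ (isActed_kernel _ v) (isActed_kernel _ v)).symm
    _ = _ := by
      rw [hact, kernel_smul, map_smul, map_smul, LinearMap.smul_apply, smul_eq_mul, smul_eq_mul,
        ← mul_assoc, ← prod_mul_distrib]
      simp only [← mul_pow, hr]

theorem IsInvariant.exists_pos_eq_mul_innerH (hB : IsInvariant (B · ·))
    (hpos : ∀ c, c ≠ 0 → 0 < B c c)
    (horth : ∀ a a' : ExpVec n d, a ≠ a' → B (Pi.single a 1) (Pi.single a' 1) = 0) :
    ∃ t : ℝ, 0 < t ∧ ∀ c c', B c c' = t * innerH n d c c' := by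
  set u : (j : Fin k) → Fin (n j + 1) → ℝ := fun _ => Pi.single 0 1
  set t := B (kernel d u) (kernel d u)
  have hu : innerH n d (kernel d u) (kernel d u) = 1 := by simp [innerH_kernel_self, u]
  have ht : 0 < t := hpos _ fun h => by simp [h, innerH] at hu
  have hdiag := B.apply_eq_sum_of_apply_single_eq_zero horth
  have hcoef : (fun a => B (Pi.single a 1) (Pi.single a 1) * multinomial a ^ 2) =
      fun a => t * etaR n d a * multinomial a ^ 2 :=
    eq_of_forall_sum_mul_monomialEval_pow_eq two_ne_zero fun v => calc
      _ = ∑ a, kernel d v a * kernel d v a * B (Pi.single a 1) (Pi.single a 1) :=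
        sum_congr rfl fun a _ => by rw [kernel]; ring
      _ = t * innerH n d (kernel d v) (kernel d v) := by
        rw [← hdiag, hB.apply_kernel_self B v, innerH_kernel_self, mul_comm]
      _ = _ := by
        rw [innerH, mul_sum]
        exact sum_congr rfl fun a _ => by rw [kernel]; ring
  refine ⟨t, ht, fun c c' => ?_⟩
  rw [hdiag, innerH, mul_sum]
  refine sum_congr rfl fun a _ => ?_
  have hm : (multinomial a : ℝ) ^ 2 ≠ 0 :=
    pow_ne_zero 2 (Nat.cast_ne_zero.2 (multinomial_pos a).ne')
  rw [mul_right_cancel₀ hm (congrFun hcoef a)]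
  ring

end MH

open MH in
theorem invariant_inner_product_unique_general
    (k : ℕ) (n : Fin k → ℕ) (d : Fin k → ℕ) :
    -- invariance of `⟨·,·⟩_i` under the action of `G`
    (∀ (O : (j : Fin k) → Matrix.orthogonalGroup (Fin (n j + 1)) ℝ)
        (c c' cO cO' : ExpVec n d → ℝ),
      IsActed n d O c cO → IsActed n d O c' cO' →
        innerH n d cO cO' = innerH n d c c') ∧
    -- the monomials are pairwise orthogonal for `⟨·,·⟩_i`
    (∀ a a' : ExpVec n d, a ≠ a' →
      innerH n d (Pi.single a 1) (Pi.single a' 1) = 0) ∧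
    -- uniqueness up to a positive scalar
    (∀ B : (ExpVec n d → ℝ) →ₗ[ℝ] (ExpVec n d → ℝ) →ₗ[ℝ] ℝ,
      (∀ c c', B c c' = B c' c) →
      (∀ c, c ≠ 0 → 0 < B c c) →
      (∀ a a' : ExpVec n d, a ≠ a' → B (Pi.single a 1) (Pi.single a' 1) = 0) →
      (∀ (O : (j : Fin k) → Matrix.orthogonalGroup (Fin (n j + 1)) ℝ)
          (c c' cO cO' : ExpVec n d → ℝ),
        IsActed n d O c cO → IsActed n d O c' cO' → B cO cO' = B c c') →
      ∃ t : ℝ, 0 < t ∧ ∀ c c', B c c' = t * innerH n d c c') :=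
  ⟨innerH_invariant, fun _ _ => innerH_single_single,
    fun B _ hpos horth hB => IsInvariant.exists_pos_eq_mul_innerH B hB hpos horth⟩

open MH in
/-- **Lemma 3.1**: the inner product `⟨f,f'⟩_i = ∑_a η(a) f_a f'_a` on `ℋ_i` is invariant
under the action of `G = O(n_1+1)×⋯×O(n_k+1)` and makes the monomials pairwise
orthogonal; moreover any `G`-invariant inner product on `ℋ_i` with respect to which the
monomials are pairwise orthogonal is a positive scalar multiple of it. -/
theorem invariant_inner_product_unique
    (k : ℕ) (hk : 0 < k) (n : Fin k → ℕ) (d : Fin k → ℕ) :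
    -- invariance of `⟨·,·⟩_i` under the action of `G`
    (∀ (O : (j : Fin k) → Matrix.orthogonalGroup (Fin (n j + 1)) ℝ)
        (c c' cO cO' : ExpVec n d → ℝ),
      IsActed n d O c cO → IsActed n d O c' cO' →
        innerH n d cO cO' = innerH n d c c') ∧
    -- the monomials are pairwise orthogonal for `⟨·,·⟩_i`
    (∀ a a' : ExpVec n d, a ≠ a' →
      innerH n d (Pi.single a 1) (Pi.single a' 1) = 0) ∧
    -- uniqueness up to a positive scalar
    (∀ B : (ExpVec n d → ℝ) →ₗ[ℝ] (ExpVec n d → ℝ) →ₗ[ℝ] ℝ,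
      (∀ c c', B c c' = B c' c) →
      (∀ c, c ≠ 0 → 0 < B c c) →
      (∀ a a' : ExpVec n d, a ≠ a' → B (Pi.single a 1) (Pi.single a' 1) = 0) →
      (∀ (O : (j : Fin k) → Matrix.orthogonalGroup (Fin (n j + 1)) ℝ)
          (c c' cO cO' : ExpVec n d → ℝ),
        IsActed n d O c cO → IsActed n d O c' cO' → B cO cO' = B c c') →
      ∃ t : ℝ, 0 < t ∧ ∀ c c', B c c' = t * innerH n d c c') :=
  invariant_inner_product_unique_general k n d
end
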